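/- For d = 4 there is no binary quartic B with (A,B)₁ = M when A = (x0 x1)² and M = (x0 x1)³, even though A divides (A,M)₂. -/

import Mathlib

open MvPolynomial

/-- Iterated partial derivative `∂^k/∂xᵢ^k`. -/
noncomputable def pd (i : Fin 2) (k : ℕ) (P : MvPolynomial (Fin 2) ℂ) :
    MvPolynomial (Fin 2) ℂ :=
  (⇑(pderiv i))^[k] P

/-- The r-th transvectant of binary forms `E` (of order `e`) and `F` (of order `f`):
`(E,F)_r = ((e−r)!(f−r)!/(e!f!)) Σᵢ (−1)^i C(r,i) ∂^r E/∂x0^{r−i}∂x1^i · ∂^r F/∂x0^i ∂x1^{r−i}`. -/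
noncomputable def transv (e f r : ℕ) (E F : MvPolynomial (Fin 2) ℂ) :
    MvPolynomial (Fin 2) ℂ :=
  C ((((e - r).factorial * (f - r).factorial : ℕ) : ℂ) /
      (((e.factorial * f.factorial : ℕ)) : ℂ)) *
    ∑ i ∈ Finset.range (r + 1),
      C ((-1 : ℂ) ^ i * (r.choose i : ℂ)) *
        (pd 0 (r - i) (pd 1 i E)) * (pd 1 (r - i) (pd 0 i F))

lemma pderiv_natCast' (i : Fin 2) (n : ℕ) :
    pderiv i ((n : MvPolynomial (Fin 2) ℂ)) = 0 := by
  rw [← map_natCast (C : ℂ →+* MvPolynomial (Fin 2) ℂ) n, pderiv_C]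

lemma pderiv_two' (i : Fin 2) : pderiv i (2 : MvPolynomial (Fin 2) ℂ) = 0 := by
  rw [← map_ofNat (C : ℂ →+* MvPolynomial (Fin 2) ℂ) 2, pderiv_C]

lemma pderiv_three' (i : Fin 2) : pderiv i (3 : MvPolynomial (Fin 2) ℂ) = 0 := by
  rw [← map_ofNat (C : ℂ →+* MvPolynomial (Fin 2) ℂ) 3, pderiv_C]

lemma pderiv_ofNat' (i : Fin 2) (n : ℕ) [n.AtLeastTwo] :
    pderiv i (OfNat.ofNat n : MvPolynomial (Fin 2) ℂ) = 0 := by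
  rw [← map_ofNat (C : ℂ →+* MvPolynomial (Fin 2) ℂ) n, pderiv_C]

lemma transv_eq_aux : transv 4 6 2 ((X 0 * X 1 : MvPolynomial (Fin 2) ℂ) ^ 2) ((X 0 * X 1) ^ 3)
    = C (-2/15 : ℂ) * (X 0 * X 1) ^ 3 := by
  have h2 : (C (2:ℂ) : MvPolynomial (Fin 2) ℂ) = 2 := map_ofNat C 2
  have h48 : (C (-48:ℂ) : MvPolynomial (Fin 2) ℂ) = -48 := by
    rw [map_neg]; rw [map_ofNat C 48]
  simp only [transv, pd, Finset.sum_range_succ, Finset.sum_range_zero]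
  norm_num [Function.iterate_succ, Function.iterate_zero, pderiv_mul, pderiv_pow, pderiv_X,
    pderiv_ofNat', pderiv_natCast', pderiv_two', pderiv_three', Nat.factorial]
  rw [show ((2:ℂ)/15) = -(1/360 * -48) by norm_num]
  rw [map_neg, C_mul, h48, h2]
  ring

lemma coeff_pderiv' (i : Fin 2) (m : Fin 2 →₀ ℕ) (P : MvPolynomial (Fin 2) ℂ) :
    coeff m (pderiv i P) = ((m i : ℂ) + 1) * coeff (m + Finsupp.single i 1) P := by
  induction P using MvPolynomial.induction_on' with
  | monomial n a =>
    rw [pderiv_monomial]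
    simp only [coeff_monomial]
    by_cases hn : n = m + Finsupp.single i 1
    · subst hn
      have h1 : m + Finsupp.single i 1 - Finsupp.single i 1 = m := by
        ext x; simp [Finsupp.tsub_apply]
      have h2 : ((m + Finsupp.single i 1 : Fin 2 →₀ ℕ)) i = m i + 1 := by
        simp [Finsupp.add_apply]
      rw [if_pos h1, h2, if_pos rfl]
      push_cast; ring
    · rw [if_neg hn, mul_zero]
      by_cases hz : n i = 0
      · by_cases hs : n - Finsupp.single i 1 = m
        · rw [if_pos hs, hz]; simp
        · rw [if_neg hs]
      · have hle : Finsupp.single i 1 ≤ n := by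
          rw [Finsupp.single_le_iff]; omega
        by_cases hs : n - Finsupp.single i 1 = m
        · exfalso; apply hn
          rw [← hs, tsub_add_cancel_of_le hle]
        · rw [if_neg hs]
  | add p q hp hq => simp [hp, hq, mul_add]

/-- for `A = (x0x1)²` and `M = (x0x1)³`, A divides `(A,M)₂` and yet
there is no binary quartic B with `(A,B)₁ = M`. -/
theorem jacobian_predicate_fails_deg_four :
    ((X 0 * X 1 : MvPolynomial (Fin 2) ℂ) ^ 2 ∣
        transv 4 6 2 ((X 0 * X 1) ^ 2) ((X 0 * X 1) ^ 3)) ∧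
      ¬ ∃ B : MvPolynomial (Fin 2) ℂ, B.IsHomogeneous 4 ∧
          transv 4 4 1 ((X 0 * X 1) ^ 2) B = (X 0 * X 1) ^ 3 := by
  constructor
  · exact ⟨C (-2/15 : ℂ) * (X 0 * X 1), by rw [transv_eq_aux]; ring⟩
  · rintro ⟨B, -, h⟩
    simp only [transv, pd, Finset.sum_range_succ, Finset.sum_range_zero] at h
    norm_num [Function.iterate_succ, Function.iterate_zero, pderiv_mul, pderiv_pow, pderiv_X,
      Nat.factorial] at h
    have h16 := congrArg (fun p => (C (16:ℂ) : MvPolynomial (Fin 2) ℂ) * p) h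
    simp only [← mul_assoc, ← C_mul] at h16
    norm_num at h16
    have h' : C (2:ℂ) * (X 0 * (X 1 * (X 1 * pderiv 1 B)))
        - C (2:ℂ) * (X 0 * (X 0 * (X 1 * pderiv 0 B)))
        = C (16:ℂ) * (X 0 * (X 1 * (X 1 * (X 1 * (X 0 * (X 0 * 1)))))) := by
      rw [show (C (2:ℂ) : MvPolynomial (Fin 2) ℂ) = 2 from map_ofNat C 2]
      linear_combination h16
    have c1 : coeff (Finsupp.single 0 3 + Finsupp.single 1 3)
        (X 0 * (X 1 * (X 1 * pderiv 1 B))) = 2 * coeff (Finsupp.single 0 2 + Finsupp.single 1 2) B := by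
      have e : (Finsupp.single 0 3 + Finsupp.single 1 3 : Fin 2 →₀ ℕ)
          = Finsupp.single 0 1 + (Finsupp.single 1 1 + (Finsupp.single 1 1
            + (Finsupp.single 0 2 + Finsupp.single 1 1))) := by
        ext x; fin_cases x <;> simp
      have e2 : (Finsupp.single 0 2 + Finsupp.single 1 1 : Fin 2 →₀ ℕ) + Finsupp.single 1 1
          = Finsupp.single 0 2 + Finsupp.single 1 2 := by
        ext x; fin_cases x <;> simp
      rw [e, coeff_X_mul, coeff_X_mul, coeff_X_mul, coeff_pderiv', e2]
      norm_num
    have c2 : coeff (Finsupp.single 0 3 + Finsupp.single 1 3)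
        (X 0 * (X 0 * (X 1 * pderiv 0 B))) = 2 * coeff (Finsupp.single 0 2 + Finsupp.single 1 2) B := by
      have e : (Finsupp.single 0 3 + Finsupp.single 1 3 : Fin 2 →₀ ℕ)
          = Finsupp.single 0 1 + (Finsupp.single 0 1 + (Finsupp.single 1 1
            + (Finsupp.single 0 1 + Finsupp.single 1 2))) := by
        ext x; fin_cases x <;> simp
      have e2 : (Finsupp.single 0 1 + Finsupp.single 1 2 : Fin 2 →₀ ℕ) + Finsupp.single 0 1
          = Finsupp.single 0 2 + Finsupp.single 1 2 := by
        ext x; fin_cases x <;> simp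
      rw [e, coeff_X_mul, coeff_X_mul, coeff_X_mul, coeff_pderiv', e2]
      norm_num
    have c3 : coeff (Finsupp.single 0 3 + Finsupp.single 1 3)
        ((X 0 * (X 1 * (X 1 * (X 1 * (X 0 * (X 0 * 1)))))) : MvPolynomial (Fin 2) ℂ) = 1 := by
      have e : (Finsupp.single 0 3 + Finsupp.single 1 3 : Fin 2 →₀ ℕ)
          = Finsupp.single 0 1 + (Finsupp.single 1 1 + (Finsupp.single 1 1
            + (Finsupp.single 1 1 + (Finsupp.single 0 1 + (Finsupp.single 0 1 + 0))))) := by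
        ext x; fin_cases x <;> simp
      rw [e, coeff_X_mul, coeff_X_mul, coeff_X_mul, coeff_X_mul, coeff_X_mul, coeff_X_mul]
      simp
    have hc := congrArg (coeff (Finsupp.single 0 3 + Finsupp.single 1 3)) h'
    rw [coeff_sub, coeff_C_mul, coeff_C_mul, coeff_C_mul, c1, c2, c3] at hc
    norm_num at hc
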